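/- arXiv:0910.3892 — 3 statements merged into one kernel-verified Lean document; each statement's English description precedes it below -/
import Mathlib

section
/- For every positive integer a, Σ_{k=0}^{3^a-1} (-2)^k·C(2k,k) ≡ 3^a (mod 3^{a+1}). -/
/-!
Put `n + 1 = 3 ^ a`. Since `4 (-2) = -8 = 1 - 9`, multiplying the sum by `4 ^ n` and expanding
`(-8) ^ k` binomially gives `∑_j (-9) ^ j W n j`, where
`W n j = ∑_{k ≤ n} C(2k,k) C(k,j) 4^(n-k)`.
Induction on `n` shows `2 (2j + 1) W n j = (n + 1) C(n,j) C(2n+2,n+1)`, so `3 ^ a` divides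
`2 (2j + 1) W n j`; as `2 (2j + 1) < 9 ^ j`, the terms with `j ≥ 1` vanish modulo `3 ^ (a + 1)`.
The term `j = 0` is `3 ^ a C(2·3^a, 3^a) / 2`, and `C(2·3^a, 3^a) ≡ 2 (mod 3)` by Lucas'
theorem.
-/

open Finset Nat

def centralBinomChooseSum (n j : ℕ) : ℕ :=
  ∑ k ∈ range (n + 1), centralBinom k * k.choose j * 4 ^ (n - k)

theorem centralBinomChooseSum_succ (n j : ℕ) :
    centralBinomChooseSum (n + 1) j
      = 4 * centralBinomChooseSum n j + centralBinom (n + 1) * (n + 1).choose j := by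
  rw [centralBinomChooseSum, sum_range_succ, Nat.sub_self, pow_zero, mul_one,
    centralBinomChooseSum, mul_sum]
  congr 1
  refine sum_congr rfl fun k hk => ?_
  rw [show n + 1 - k = n - k + 1 by grind, pow_succ]
  ring

theorem add_one_mul_choose_add_mul_choose_add_one (n j : ℕ) :
    (n + 1) * n.choose j + j * (n + 1).choose j = (n + 1) * (n + 1).choose j := by
  rcases le_or_gt j (n + 1) with hj | hj
  · have h := choose_mul_succ_eq n j
    zify [hj] at h ⊢
    linear_combination h
  · simp [choose_eq_zero_of_lt hj, choose_eq_zero_of_lt (Nat.lt_of_succ_lt hj)]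

theorem two_mul_two_mul_add_one_mul_centralBinomChooseSum (n j : ℕ) :
    2 * (2 * j + 1) * centralBinomChooseSum n j = (n + 1) * n.choose j * centralBinom (n + 1) := by
  induction n with
  | zero =>
    rcases j with _ | j
    · simp [centralBinomChooseSum, centralBinom_eq_two_mul_choose]
    · simp [centralBinomChooseSum, choose_eq_zero_of_lt]
  | succ n ih =>
    have hpascal := add_one_mul_choose_add_mul_choose_add_one n j
    have hcb := succ_mul_centralBinom_succ (n + 1)
    rw [centralBinomChooseSum_succ]
    calc 2 * (2 * j + 1) * (4 * centralBinomChooseSum n j + centralBinom (n + 1) * (n + 1).choose j)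
        = 4 * (2 * (2 * j + 1) * centralBinomChooseSum n j)
          + 2 * (2 * j + 1) * centralBinom (n + 1) * (n + 1).choose j := by ring
      _ = 2 * (2 * (n + 1) + 1) * centralBinom (n + 1) * (n + 1).choose j := by
        rw [ih]; linear_combination (4 * centralBinom (n + 1)) * hpascal
      _ = (n + 1 + 1) * (n + 1).choose j * centralBinom (n + 1 + 1) := by
        rw [← hcb]; ring

theorem sum_range_pow_mul_choose_of_le {R : Type*} [CommSemiring R] (x : R) {k n : ℕ}
    (hkn : k ≤ n) : ∑ j ∈ range (n + 1), x ^ j * k.choose j = (x + 1) ^ k := by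
  rw [add_pow, ← sum_range_add_sum_Ico _ (Nat.succ_le_succ hkn)]
  rw [sum_eq_zero (s := Ico _ _) fun j hj => by simp [choose_eq_zero_of_lt (mem_Ico.mp hj).1]]
  simp

theorem four_pow_mul_sum_range_neg_two_pow_mul_centralBinom (n : ℕ) :
    (4 : ℤ) ^ n * ∑ k ∈ range (n + 1), (-2) ^ k * (centralBinom k : ℤ)
      = ∑ j ∈ range (n + 1), (-9) ^ j * (centralBinomChooseSum n j : ℤ) := by
  simp only [centralBinomChooseSum, Nat.cast_sum, Nat.cast_mul, Nat.cast_pow, mul_sum]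
  rw [sum_comm]
  refine sum_congr rfl fun k hk => ?_
  have hkn : k ≤ n := Nat.lt_succ_iff.mp (mem_range.mp hk)
  have hbinom := sum_range_pow_mul_choose_of_le (-9 : ℤ) hkn
  calc (4 : ℤ) ^ n * ((-2) ^ k * centralBinom k)
      = centralBinom k * 4 ^ (n - k) * (-9 + 1) ^ k := by
        rw [← Nat.sub_add_cancel hkn, pow_add, Nat.add_sub_cancel,
          show (-9 + 1 : ℤ) = -2 * 4 by norm_num, mul_pow]
        ring
    _ = _ := by rw [← hbinom, mul_sum]; exact sum_congr rfl fun j _ => by ring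

theorem Nat.pow_succ_dvd_pow_mul_of_pow_dvd_mul {p m e a x : ℕ} (hp : p.Prime) (hm : m ≠ 0)
    (hme : m < p ^ e) (h : p ^ a ∣ m * x) : p ^ (a + 1) ∣ p ^ e * x := by
  set v := m.factorization p
  have hv : v < e := (Nat.pow_lt_pow_iff_right hp.one_lt).mp ((ordProj_le p hm).trans_lt hme)
  have hcop : Coprime (p ^ a) (ordCompl[p] m) := (coprime_ordCompl hp hm).pow_left a
  have hdvd : p ^ a ∣ p ^ v * x := by
    refine hcop.dvd_of_dvd_mul_left ?_
    rwa [mul_left_comm, ← mul_assoc, ordProj_mul_ordCompl_eq_self]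
  calc p ^ (a + 1) ∣ p ^ (e - v) * p ^ a := by
        rw [← pow_add]; exact pow_dvd_pow p (by omega)
    _ ∣ p ^ (e - v) * (p ^ v * x) := mul_dvd_mul_left _ hdvd
    _ = p ^ e * x := by rw [← mul_assoc, ← pow_add, Nat.sub_add_cancel hv.le]

theorem Nat.centralBinom_prime_pow_modEq_two {p : ℕ} [Fact p.Prime] (a : ℕ) :
    centralBinom (p ^ a) ≡ 2 [MOD p] := by
  simpa [centralBinom_eq_two_mul_choose, mul_comm] using
    Choose.choose_pow_mul_pow_mul_modEq_choose_nat (p := p) (k := a) (a := 2) (b := 1)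

theorem Int.ModEq.cancel_left_of_isCoprime {m c a b : ℤ} (hmc : IsCoprime m c)
    (h : c * a ≡ c * b [ZMOD m]) : a ≡ b [ZMOD m] := by
  rw [Int.modEq_iff_dvd, ← mul_sub] at h
  exact Int.modEq_iff_dvd.mpr (hmc.dvd_of_dvd_mul_left h)

theorem two_mul_two_mul_add_one_lt_three_pow {j : ℕ} (hj : 1 ≤ j) :
    2 * (2 * j + 1) < 3 ^ (2 * j) := by
  have hbernoulli : 1 + j * 8 ≤ 9 ^ j := by
    exact_mod_cast one_add_mul_le_pow (a := (8 : ℤ)) (by norm_num) j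
  rw [pow_mul]; norm_num
  omega

theorem three_pow_succ_dvd_nine_pow_mul_centralBinomChooseSum {a n j : ℕ} (hn : n + 1 = 3 ^ a)
    (hj : 1 ≤ j) : 3 ^ (a + 1) ∣ 9 ^ j * centralBinomChooseSum n j := by
  have h := two_mul_two_mul_add_one_mul_centralBinomChooseSum n j
  rw [hn, mul_assoc (3 ^ a)] at h
  rw [show 9 ^ j = 3 ^ (2 * j) by rw [pow_mul]; norm_num]
  exact pow_succ_dvd_pow_mul_of_pow_dvd_mul prime_three (by positivity)
    (two_mul_two_mul_add_one_lt_three_pow hj) (h ▸ dvd_mul_right _ _)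

theorem sum_range_neg_nine_pow_mul_centralBinomChooseSum_modEq {a n : ℕ} (hn : n + 1 = 3 ^ a) :
    ∑ j ∈ range (n + 1), (-9 : ℤ) ^ j * (centralBinomChooseSum n j : ℤ)
      ≡ centralBinomChooseSum n 0 [ZMOD 3 ^ (a + 1)] := by
  have htail : (3 : ℤ) ^ (a + 1) ∣
      ∑ j ∈ range n, (-9) ^ (j + 1) * (centralBinomChooseSum n (j + 1) : ℤ) := by
    refine dvd_sum fun j _ => ?_
    have h := Int.natCast_dvd_natCast.mpr
      (three_pow_succ_dvd_nine_pow_mul_centralBinomChooseSum hn (Nat.le_add_left 1 j))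
    push_cast at h
    rw [neg_pow, mul_assoc]
    exact h.mul_left _
  rw [sum_range_succ', pow_zero, one_mul, Int.modEq_iff_dvd]
  simpa using htail.neg_right

theorem stmt_8_general (a : ℕ) :
    (∑ k ∈ Finset.range (3 ^ a), (-2 : ℤ) ^ k * (Nat.choose (2 * k) k : ℤ))
      ≡ (3 : ℤ) ^ a [ZMOD (3 : ℤ) ^ (a + 1)] := by
  obtain ⟨n, hn⟩ : ∃ n, n + 1 = 3 ^ a :=
    ⟨3 ^ a - 1, Nat.sub_add_cancel (Nat.one_le_pow _ _ three_pos)⟩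
  simp only [← centralBinom_eq_two_mul_choose]
  rw [← hn]
  set S := ∑ k ∈ range (n + 1), (-2 : ℤ) ^ k * (centralBinom k : ℤ)
  have hS : (4 : ℤ) ^ n * S ≡ centralBinomChooseSum n 0 [ZMOD 3 ^ (a + 1)] := by
    rw [four_pow_mul_sum_range_neg_two_pow_mul_centralBinom]
    exact sum_range_neg_nine_pow_mul_centralBinomChooseSum_modEq hn
  have hW : 2 * (centralBinomChooseSum n 0 : ℤ) = 3 ^ a * centralBinom (3 ^ a) := by
    have h := two_mul_two_mul_add_one_mul_centralBinomChooseSum n 0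
    rw [hn] at h
    exact_mod_cast by simpa using h
  have hcb : (centralBinom (3 ^ a) : ℤ) ≡ 2 * 4 ^ n [ZMOD 3] := by
    have := Fact.mk prime_three
    have h := Int.natCast_modEq_iff.mpr (centralBinom_prime_pow_modEq_two (p := 3) a)
    push_cast at h
    refine h.trans ?_
    simpa using ((show (4 : ℤ) ≡ 1 [ZMOD 3] by decide).pow n).mul_left 2 |>.symm
  have hcop : IsCoprime ((3 : ℤ) ^ (a + 1)) (2 * 4 ^ n) := by
    refine IsCoprime.pow_left (IsCoprime.mul_right ?_ (IsCoprime.pow_right ?_)) <;> norm_num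
  refine Int.ModEq.cancel_left_of_isCoprime hcop ?_
  calc
    2 * 4 ^ n * S = 2 * (4 ^ n * S) := by ring
    _ ≡ 2 * centralBinomChooseSum n 0 [ZMOD 3 ^ (a + 1)] := hS.mul_left 2
    _ = 3 ^ a * centralBinom (3 ^ a) := hW
    _ ≡ 3 ^ a * (2 * 4 ^ n) [ZMOD 3 ^ (a + 1)] := by rw [pow_succ]; exact hcb.mul_left'
    _ = 2 * 4 ^ n * 3 ^ a := by ring

theorem stmt_8 (a : ℕ) (ha : 0 < a) :
    (∑ k ∈ Finset.range (3 ^ a), (-2 : ℤ) ^ k * (Nat.choose (2 * k) k : ℤ))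
      ≡ (3 : ℤ) ^ a [ZMOD (3 : ℤ) ^ (a + 1)] :=
  stmt_8_general a
end

section
/- Let p be a prime and n a positive integer with n ≡ 1 (mod p) and all base-p digits of n in {0,1}. Then Σ_{k=0}^{n-1} ((p-1)k)!/(k!)^{p-1} ≡ (-1)^{ψ_p(n)-1} (mod p), where ψ_p(n) is the sum of the base-p digits of n. -/
/-!
Write `M k = ((p-1)k)!/(k!)^(p-1) = ∏_{i<p-1} C((i+1)k, k)`. Lucas's theorem applied to each
factor gives `M (pq + r) ≡ M r · M q (mod p)` for `r < p`, and `M 0 = 1`, `M 1 = (p-1)! ≡ -1`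
(Wilson), `M r ≡ 0` for `2 ≤ r < p`. Hence every block `∑_{r<p} M (pq + r)` vanishes, so the sum
over `k < n = pq + 1` collapses to its last term `M (pq) ≡ M q`, and for `q` with digits in `{0, 1}`
the multiplicativity gives `M q ≡ (-1)` to the digit sum of `q`, which is `ψ_p(n) - 1`.
-/

open Finset

def centralMultinomial (m k : ℕ) : ℕ :=
  Nat.multinomial (range m) fun _ => k

@[simp]
theorem centralMultinomial_zero (m : ℕ) : centralMultinomial m 0 = 1 := by
  simp [centralMultinomial, Nat.multinomial]

theorem centralMultinomial_eq_prod_choose (m k : ℕ) :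
    centralMultinomial m k = ∏ i ∈ range m, ((i + 1) * k).choose k := by
  induction m with
  | zero => simp [centralMultinomial]
  | succ m ih =>
    rw [centralMultinomial, range_add_one, Nat.multinomial_insert notMem_range_self,
      ← centralMultinomial, ih, prod_insert notMem_range_self]
    simp only [sum_const, card_range, smul_eq_mul]
    ring_nf

section ZModPrime

variable {p : ℕ} [Fact p.Prime]

theorem natCast_choose_mul_add_mul_add {a b c d : ℕ} (hb : b < p) (hd : d < p) :
    ((p * a + b).choose (p * c + d) : ZMod p) = b.choose d * a.choose c := by
  have hp := (Fact.out : p.Prime).pos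
  have h := Choose.choose_modEq_choose_mod_mul_choose_div_nat (p := p) (n := p * a + b)
    (k := p * c + d)
  rw [Nat.mul_add_mod, Nat.mul_add_mod, Nat.mul_add_div hp, Nat.mul_add_div hp,
    Nat.mod_eq_of_lt hb, Nat.mod_eq_of_lt hd, Nat.div_eq_of_lt hb, Nat.div_eq_of_lt hd,
    add_zero, add_zero] at h
  exact_mod_cast (ZMod.natCast_eq_natCast_iff _ _ _).mpr h

theorem natCast_centralMultinomial_mul (m q : ℕ) :
    (centralMultinomial m (p * q) : ZMod p) = centralMultinomial m q := by
  simp only [centralMultinomial_eq_prod_choose, Nat.cast_prod]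
  refine prod_congr rfl fun i _ => ?_
  rw [mul_left_comm]
  exact (ZMod.natCast_eq_natCast_iff _ _ _).mpr Choose.choose_mul_mul_modEq_choose_nat

theorem natCast_centralMultinomial_mul_add_one (q : ℕ) :
    (centralMultinomial (p - 1) (p * q + 1) : ZMod p) = -centralMultinomial (p - 1) q := by
  have hp : p.Prime := Fact.out
  have factor (i : ℕ) (hi : i ∈ range (p - 1)) :
      ((((i + 1) * (p * q + 1)).choose (p * q + 1) : ℕ) : ZMod p)
        = (i + 1 : ℕ) * (((i + 1) * q).choose q : ℕ) := by
    have hi : i + 1 < p := by have := mem_range.mp hi; omega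
    rw [show (i + 1) * (p * q + 1) = p * ((i + 1) * q) + (i + 1) by ring,
      natCast_choose_mul_add_mul_add hi hp.one_lt, Nat.choose_one_right]
  simp only [centralMultinomial_eq_prod_choose, Nat.cast_prod]
  rw [prod_congr rfl factor, prod_mul_distrib, ← Nat.cast_prod, prod_range_add_one_eq_factorial,
    ZMod.wilsons_lemma, neg_one_mul]

theorem natCast_centralMultinomial_one : (centralMultinomial (p - 1) 1 : ZMod p) = -1 := by
  simpa using natCast_centralMultinomial_mul_add_one (p := p) 0

theorem natCast_centralMultinomial_mul_add_eq_zero (q : ℕ) {r : ℕ} (hr : 2 ≤ r) (hrp : r < p) :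
    (centralMultinomial (p - 1) (p * q + r) : ZMod p) = 0 := by
  have hp : p.Prime := Fact.out
  -- The least multiple `j r` of `r` exceeding `p` has bottom digit `t = j r - p < r`.
  obtain ⟨j, t, hjr, htr, hj⟩ : ∃ j t, j * r = p + t ∧ t < r ∧ 1 ≤ j ∧ j ≤ p - 1 := by
    have hdiv := Nat.div_add_mod p r
    have hmod := Nat.mod_lt p (by omega : r > 0)
    have hmod0 : p % r ≠ 0 := fun h => by
      rcases hp.eq_one_or_self_of_dvd r (Nat.dvd_of_mod_eq_zero h) with h | h <;> omega
    have hle : 2 * (p / r) ≤ r * (p / r) := Nat.mul_le_mul_right _ hr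
    exact ⟨p / r + 1, r - p % r, by rw [add_one_mul, mul_comm]; omega, by omega, by omega, by omega⟩
  rw [centralMultinomial_eq_prod_choose, Nat.cast_prod]
  refine prod_eq_zero (i := j - 1) (mem_range.mpr (by omega)) ?_
  rw [Nat.sub_add_cancel hj.1,
    show j * (p * q + r) = p * (j * q + 1) + t by rw [mul_add, hjr]; ring,
    natCast_choose_mul_add_mul_add (by omega) hrp, Nat.choose_eq_zero_of_lt htr, Nat.cast_zero,
    zero_mul]

theorem natCast_centralMultinomial_mul_add (q : ℕ) {r : ℕ} (hr : r < p) :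
    (centralMultinomial (p - 1) (p * q + r) : ZMod p)
      = centralMultinomial (p - 1) r * centralMultinomial (p - 1) q := by
  match r, hr with
  | 0, _ => simp [natCast_centralMultinomial_mul]
  | 1, _ => simp [natCast_centralMultinomial_mul_add_one, natCast_centralMultinomial_one]
  | r + 2, hr =>
    have h : (centralMultinomial (p - 1) (r + 2) : ZMod p) = 0 := by
      simpa using natCast_centralMultinomial_mul_add_eq_zero 0 le_add_self hr
    rw [natCast_centralMultinomial_mul_add_eq_zero q le_add_self hr, h, zero_mul]

theorem sum_range_natCast_centralMultinomial :
    ∑ r ∈ range p, (centralMultinomial (p - 1) r : ZMod p) = 0 := by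
  rw [range_eq_Ico, ← sum_Ico_consecutive _ (Nat.zero_le 2) (Fact.out : p.Prime).two_le,
    sum_eq_zero (s := Ico 2 p) fun r hr => by
      simpa using natCast_centralMultinomial_mul_add_eq_zero 0 (mem_Ico.mp hr).1 (mem_Ico.mp hr).2,
    add_zero, ← range_eq_Ico]
  simp [sum_range_succ, natCast_centralMultinomial_one]

theorem sum_range_mul_natCast_centralMultinomial (m : ℕ) :
    ∑ k ∈ range (p * m), (centralMultinomial (p - 1) k : ZMod p) = 0 := by
  induction m with
  | zero => simp
  | succ m ih =>
    rw [mul_add_one, sum_range_add, ih, zero_add,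
      sum_congr rfl fun r hr => natCast_centralMultinomial_mul_add m (mem_range.mp hr), ← sum_mul,
      sum_range_natCast_centralMultinomial, zero_mul]

theorem natCast_centralMultinomial_eq_neg_one_pow_digits_sum {k : ℕ}
    (hk : ∀ d ∈ Nat.digits p k, d ≤ 1) :
    (centralMultinomial (p - 1) k : ZMod p) = (-1) ^ (Nat.digits p k).sum := by
  induction k using Nat.strong_induction_on with
  | _ k ih =>
  rcases k.eq_zero_or_pos with rfl | hk0
  · simp
  have hp := (Fact.out : p.Prime).one_lt
  rw [Nat.digits_def' hp hk0] at hk ⊢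
  have hlow : (centralMultinomial (p - 1) (k % p) : ZMod p) = (-1) ^ (k % p) := by
    have : k % p ≤ 1 := hk _ List.mem_cons_self
    interval_cases k % p
    · simp
    · simp [natCast_centralMultinomial_one]
  conv_lhs => rw [← Nat.div_add_mod k p]
  rw [natCast_centralMultinomial_mul_add _ (Nat.mod_lt k (by omega)), hlow,
    ih _ (Nat.div_lt_self hk0 hp) fun d hd => hk d (List.mem_cons_of_mem _ hd), List.sum_cons,
    pow_add]

end ZModPrime

theorem stmt_16_general (p : ℕ) (hp : p.Prime) (n : ℕ)
    (h1 : n ≡ 1 [MOD p]) (h2 : ∀ d ∈ Nat.digits p n, d ≤ 1) :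
    (∑ k ∈ Finset.range n, (Nat.multinomial (Finset.range (p - 1)) (fun _ => k) : ZMod p))
      = (-1) ^ ((Nat.digits p n).sum - 1) := by
  have := Fact.mk hp
  have hmod : n % p = 1 := Nat.mod_eq_of_lt hp.one_lt ▸ h1
  obtain ⟨q, rfl⟩ : ∃ q, n = p * q + 1 := ⟨n / p, hmod ▸ (Nat.div_add_mod n p).symm⟩
  have hdigits : Nat.digits p (p * q + 1) = 1 :: Nat.digits p q := by
    rw [add_comm]
    exact Nat.digits_add p hp.one_lt 1 q hp.one_lt (Or.inl one_ne_zero)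
  change ∑ k ∈ range (p * q + 1), (centralMultinomial (p - 1) k : ZMod p) = _
  rw [sum_range_succ, sum_range_mul_natCast_centralMultinomial, zero_add,
    natCast_centralMultinomial_mul, hdigits, List.sum_cons, Nat.add_sub_cancel_left]
  exact natCast_centralMultinomial_eq_neg_one_pow_digits_sum fun d hd =>
    h2 d (hdigits ▸ List.mem_cons_of_mem 1 hd)

theorem stmt_16 (p : ℕ) (hp : p.Prime) (n : ℕ) (hn : 0 < n)
    (h1 : n ≡ 1 [MOD p]) (h2 : ∀ d ∈ Nat.digits p n, d ≤ 1) :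
    (∑ k ∈ Finset.range n, (Nat.multinomial (Finset.range (p - 1)) (fun _ => k) : ZMod p))
      = (-1) ^ ((Nat.digits p n).sum - 1) :=
  stmt_16_general p hp n h1 h2
end

section
/- Let p be a prime, a a positive integer, and m an integer with p > 3 and p | m-4. Then (1/p^a)·Σ_{k=0}^{p^a-1} C(2k,k)/m^k ≡ 1 (mod p), i.e., ν_p(Σ_{k=0}^{p^a-1} C(2k,k)/m^k - p^a) ≥ a+1. -/
/-!
Write `1 / m = (1 + ε) / 4` with `ε = (4 - m) / m`, so that `ν_p(ε) ≥ 1`. Expanding `(1 + ε)^k`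
binomially and summing over `k` with the identity
`(2j + 1) ∑_{k<N} C(k, j) C(2k, k) / 4^k = 2 (j + 1) C(N, j + 1) C(2N, N) / 4^N` gives
`∑_{k<N} C(2k, k) / m^k = ∑_{j<N} ε^j · 2 (j + 1) C(N, j + 1) C(2N, N) / ((2j + 1) 4^N)`.
For `N = p^a` the term `j = 0` is `N · 2 C(2N, N) / 4^N ≡ N (mod p^(a+1))`, since
`C(2p^a, p^a) ≡ 2` by Lucas and `4^(p^a) ≡ 4` by Fermat. For `j ≥ 1`, `p^a` divides
`(j + 1) C(N, j + 1) = N C(N - 1, j)` and `ν_p(2j + 1) < j` because `p ≥ 5`, so the term has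
valuation at least `j + a - (j - 1) = a + 1`.
-/

open Finset

/-- `ν_p(x) ≥ c`, with the convention `ν_p(0) = ∞` (Mathlib's `padicValRat p 0` is `0`). -/
def PadicValGE (p : ℕ) (c : ℤ) (x : ℚ) : Prop :=
  x = 0 ∨ c ≤ padicValRat p x

namespace PadicValGE

variable {p : ℕ} {c d : ℤ} {x y : ℚ}

theorem zero : PadicValGE p c 0 := Or.inl rfl

theorem mono (h : PadicValGE p d x) (hcd : c ≤ d) : PadicValGE p c x :=
  h.imp id hcd.trans

variable [Fact p.Prime]

theorem add (hx : PadicValGE p c x) (hy : PadicValGE p c y) : PadicValGE p c (x + y) := by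
  rcases hx with rfl | hx
  · simpa using hy
  rcases hy with rfl | hy
  · rw [add_zero]; exact Or.inr hx
  by_cases hxy : x + y = 0
  · exact Or.inl hxy
  · exact Or.inr ((le_min hx hy).trans (padicValRat.min_le_padicValRat_add hxy))

theorem sum {ι : Type*} {s : Finset ι} {f : ι → ℚ} (h : ∀ i ∈ s, PadicValGE p c (f i)) :
    PadicValGE p c (∑ i ∈ s, f i) :=
  Finset.sum_induction f _ (fun _ _ => add) zero h

theorem mul (hx : PadicValGE p c x) (hy : PadicValGE p d y) : PadicValGE p (c + d) (x * y) := by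
  by_cases hxy : x * y = 0
  · exact Or.inl hxy
  rw [mul_eq_zero, not_or] at hxy
  exact Or.inr (by
    rw [padicValRat.mul hxy.1 hxy.2]
    exact add_le_add (hx.resolve_left hxy.1) (hy.resolve_left hxy.2))

theorem pow (hx : PadicValGE p c x) (n : ℕ) : PadicValGE p (n * c) (x ^ n) := by
  induction n with
  | zero => exact Or.inr (by simp)
  | succ n ih => simpa [pow_succ, add_mul] using ih.mul hx

theorem div (hx : PadicValGE p c x) (y : ℚ) : PadicValGE p (c - padicValRat p y) (x / y) := by
  by_cases hxy : x / y = 0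
  · exact Or.inl hxy
  rw [div_eq_zero_iff, not_or] at hxy
  exact Or.inr (by
    rw [padicValRat.div hxy.1 hxy.2]
    exact sub_le_sub_right (hx.resolve_left hxy.1) _)

theorem of_intCast_dvd {n : ℕ} {z : ℤ} (h : (p : ℤ) ^ n ∣ z) : PadicValGE p n z :=
  ((padicValInt_dvd_iff n z).1 h).imp (by rintro rfl; simp)
    (fun h => by rw [padicValRat.of_int]; exact_mod_cast h)

end PadicValGE

theorem two_mul_add_one_mul_sum_choose_mul_centralBinom_div_four_pow (j N : ℕ) :
    (2 * j + 1) * ∑ k ∈ range N, (k.choose j * k.centralBinom / 4 ^ k : ℚ) =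
      2 * ((j + 1) * N.choose (j + 1)) * N.centralBinom / 4 ^ N := by
  induction N with
  | zero => simp
  | succ N ih =>
    have hcb : ((N : ℚ) + 1) * (N + 1).centralBinom = 2 * (2 * N + 1) * N.centralBinom := by
      exact_mod_cast N.succ_mul_centralBinom_succ
    have hch : ((N : ℚ) + 1) * N.choose j = (N.choose j + N.choose (j + 1)) * (j + 1) := by
      exact_mod_cast Nat.choose_succ_succ' N j ▸ N.add_one_mul_choose_eq j
    rw [sum_range_succ, mul_add, ih, Nat.choose_succ_succ', pow_succ]
    push_cast
    linear_combination ((N + 1).centralBinom / (2 * 4 ^ N) - 2 * N.centralBinom / 4 ^ N : ℚ) * hch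
      - (N.choose j / (2 * 4 ^ N) : ℚ) * hcb

theorem sum_mul_one_add_pow {R : Type*} [CommSemiring R] (f : ℕ → R) (x : R) (N : ℕ) :
    ∑ k ∈ range N, f k * (1 + x) ^ k = ∑ j ∈ range N, x ^ j * ∑ k ∈ range N, k.choose j * f k := by
  have binomial : ∀ k ∈ range N, (1 + x) ^ k = ∑ j ∈ range N, x ^ j * k.choose j := by
    intro k hk
    rw [add_comm, add_pow]
    simp only [one_pow, mul_one]
    refine sum_subset (range_subset_range.2 (mem_range.1 hk)) fun j _ hj => ?_
    rw [Nat.choose_eq_zero_of_lt (by simpa using hj), Nat.cast_zero, mul_zero]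
  rw [sum_congr rfl fun k hk => by rw [binomial k hk, mul_sum], sum_comm]
  refine sum_congr rfl fun j _ => ?_
  rw [mul_sum]
  exact sum_congr rfl fun k _ => by ring

theorem padicValNat_two_mul_add_one_lt {p j : ℕ} (hp : 5 ≤ p) (hj : j ≠ 0) :
    padicValNat p (2 * j + 1) < j := by
  refine (padicValNat_le_nat_log _).trans_lt (Nat.log_lt_of_lt_pow (by omega) ?_)
  have bernoulli : 1 + j * 4 ≤ 5 ^ j := by
    exact_mod_cast one_add_mul_le_pow (by norm_num : (-2 : ℤ) ≤ 4) j
  calc 2 * j + 1 < 1 + j * 4 := by omega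
    _ ≤ 5 ^ j := bernoulli
    _ ≤ p ^ j := Nat.pow_le_pow_left hp j

theorem padicValRat_intCast_eq_zero {p : ℕ} {z : ℤ} (h : ¬(p : ℤ) ∣ z) : padicValRat p z = 0 := by
  rw [padicValRat.of_int, padicValInt.eq_zero_of_not_dvd h, Nat.cast_zero]

section

variable {p : ℕ} [Fact p.Prime]

theorem not_dvd_four (hp2 : p ≠ 2) : ¬p ∣ 4 := fun h =>
  hp2 ((Nat.prime_dvd_prime_iff_eq Fact.out Nat.prime_two).1
    (Nat.Prime.dvd_of_dvd_pow (n := 2) Fact.out h))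

theorem padicValRat_four_pow (hp2 : p ≠ 2) (n : ℕ) : padicValRat p (4 ^ n) = 0 := by
  have h : ¬p ∣ 4 ^ n := fun h => not_dvd_four hp2 (Nat.Prime.dvd_of_dvd_pow Fact.out h)
  exact_mod_cast padicValNat.eq_zero_of_not_dvd h

theorem not_intCast_dvd_of_dvd_sub_four (hp2 : p ≠ 2) {m : ℤ} (h : (p : ℤ) ∣ m - 4) :
    ¬(p : ℤ) ∣ m :=
  fun hm => not_dvd_four hp2 (by exact_mod_cast (by simpa using dvd_sub hm h : (p : ℤ) ∣ 4))

theorem padicValGE_four_sub_div (hp2 : p ≠ 2) {m : ℤ} (h : (p : ℤ) ∣ m - 4) :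
    PadicValGE p 1 ((4 - m) / m) := by
  have h4m : (p : ℤ) ^ 1 ∣ 4 - m := by simpa using h.neg_right
  simpa [padicValRat_intCast_eq_zero (not_intCast_dvd_of_dvd_sub_four hp2 h)] using
    (PadicValGE.of_intCast_dvd h4m).div m

theorem centralBinom_prime_pow_modEq (a : ℕ) : (p ^ a).centralBinom ≡ 2 [MOD p] := by
  simpa [Nat.centralBinom, mul_comm] using
    Choose.choose_pow_mul_pow_mul_modEq_choose_nat (p := p) (k := a) (a := 2) (b := 1)

theorem padicValGE_two_mul_centralBinom_div_four_pow_sub (hp2 : p ≠ 2) (a : ℕ) :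
    PadicValGE p (a + 1) (2 * p ^ a * (p ^ a).centralBinom / 4 ^ p ^ a - p ^ a) := by
  have hp : (p : ℤ) ∣ 2 * (p ^ a).centralBinom - 4 ^ p ^ a := by
    rw [← ZMod.intCast_zmod_eq_zero_iff_dvd]
    have hcb := (ZMod.natCast_eq_natCast_iff _ _ p).2 (centralBinom_prime_pow_modEq a)
    push_cast [ZMod.pow_card_pow, hcb]
    norm_num
  have hdvd : (p : ℤ) ^ (a + 1) ∣ p ^ a * (2 * (p ^ a).centralBinom - 4 ^ p ^ a) := by
    rw [pow_succ]; exact mul_dvd_mul_left _ hp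
  have h := (PadicValGE.of_intCast_dvd hdvd).div (4 ^ p ^ a)
  rw [padicValRat_four_pow hp2, sub_zero, Nat.cast_succ] at h
  convert h using 2
  push_cast
  field_simp

theorem padicValGE_pow_mul_choose_mul_centralBinom_div (hp5 : 5 ≤ p) {ε : ℚ}
    (hε : PadicValGE p 1 ε) (a : ℕ) {j : ℕ} (hj : j ≠ 0) :
    PadicValGE p (a + 1) (ε ^ j *
      (2 * ((j + 1) * (p ^ a).choose (j + 1)) * (p ^ a).centralBinom / 4 ^ p ^ a) /
        (2 * j + 1)) := by
  obtain ⟨n, hn⟩ : ∃ n, p ^ a = n + 1 :=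
    Nat.exists_eq_add_one.2 (pow_pos (Fact.out : p.Prime).pos a)
  have hdvd : (p : ℤ) ^ a ∣
      ((2 * ((j + 1) * (p ^ a).choose (j + 1)) * (p ^ a).centralBinom : ℕ) : ℤ) := by
    refine Int.natCast_dvd_natCast.2 (Dvd.dvd.mul_right (Dvd.dvd.mul_left ?_ _) _)
    rw [hn, mul_comm, ← Nat.add_one_mul_choose_eq]
    exact Dvd.intro _ rfl
  have h := (((hε.pow j).mul (PadicValGE.of_intCast_dvd hdvd)).div (4 ^ p ^ a)).div
    ((2 * j + 1 : ℕ) : ℚ)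
  rw [padicValRat_four_pow (by omega), padicValRat.of_nat] at h
  refine (by simpa [mul_div_assoc] using h : PadicValGE p _ _).mono ?_
  have := padicValNat_two_mul_add_one_lt hp5 hj
  omega

end

theorem sum_centralBinom_div_pow {m : ℚ} (hm : m ≠ 0) (N : ℕ) :
    ∑ k ∈ range N, (k.centralBinom : ℚ) / m ^ k = ∑ j ∈ range N, ((4 - m) / m) ^ j *
      (2 * ((j + 1) * N.choose (j + 1)) * N.centralBinom / 4 ^ N) / (2 * j + 1) := by
  have h4m : ∀ k : ℕ,
      (k.centralBinom : ℚ) / m ^ k = k.centralBinom / 4 ^ k * (1 + (4 - m) / m) ^ k := by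
    intro k
    rw [show 1 + (4 - m) / m = 4 / m by field_simp; ring, div_pow]
    field_simp
  rw [sum_congr rfl fun k _ => h4m k, sum_mul_one_add_pow]
  refine sum_congr rfl fun j _ => ?_
  rw [mul_div_assoc, ← two_mul_add_one_mul_sum_choose_mul_centralBinom_div_four_pow]
  field_simp

theorem stmt_19_general (p : ℕ) (hp : p.Prime) (h3 : 3 < p) (a : ℕ) (m : ℤ)
    (hdvd : (p : ℤ) ∣ m - 4) :
    (∑ k ∈ Finset.range (p ^ a), (Nat.choose (2 * k) k : ℚ) / (m : ℚ) ^ k) = (p : ℚ) ^ a ∨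
      ((a : ℤ) + 1) ≤
        padicValRat p
          ((∑ k ∈ Finset.range (p ^ a), (Nat.choose (2 * k) k : ℚ) / (m : ℚ) ^ k)
            - (p : ℚ) ^ a) := by
  have : Fact p.Prime := ⟨hp⟩
  have hp5 : 5 ≤ p := by
    by_contra h
    obtain rfl : p = 4 := by omega
    norm_num at hp
  have hp2 : p ≠ 2 := by omega
  have hm : (m : ℚ) ≠ 0 := Int.cast_ne_zero.2 <| by
    rintro rfl
    exact not_intCast_dvd_of_dvd_sub_four hp2 hdvd (dvd_zero _)
  rw [← sub_eq_zero]
  simp only [← Nat.centralBinom_eq_two_mul_choose]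
  change PadicValGE p (a + 1) _
  rw [sum_centralBinom_div_pow hm, range_eq_Ico, sum_eq_sum_Ico_succ_bot (pow_pos hp.pos a),
    add_sub_right_comm]
  refine .add ?_ (.sum fun j hj => padicValGE_pow_mul_choose_mul_centralBinom_div hp5
    (padicValGE_four_sub_div hp2 hdvd) a (by simp at hj; omega))
  simpa using padicValGE_two_mul_centralBinom_div_four_pow_sub hp2 a

theorem stmt_19 (p : ℕ) (hp : p.Prime) (h3 : 3 < p) (a : ℕ) (ha : 0 < a) (m : ℤ)
    (hdvd : (p : ℤ) ∣ m - 4) :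
    (∑ k ∈ Finset.range (p ^ a), (Nat.choose (2 * k) k : ℚ) / (m : ℚ) ^ k) = (p : ℚ) ^ a ∨
      ((a : ℤ) + 1) ≤
        padicValRat p
          ((∑ k ∈ Finset.range (p ^ a), (Nat.choose (2 * k) k : ℚ) / (m : ℚ) ^ k)
            - (p : ℚ) ^ a) :=
  stmt_19_general p hp h3 a m hdvd
end
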